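/- Let F be an r-uniform hypergraph that covers pairs with v(F) ≤ t, and suppose π(F) < r!·λ(K_t^(r)) = t^(−r)·C(t,r)·r!. Let G be an r-graph that covers pairs, does not contain F^{+(t+1)} as a subgraph (where F^{+(t+1)} is F with isolated vertices added to reach t+1 vertices), and satisfies λ(G) > max{λ*, π(F)/r!} where λ* is the maximum Lagrangian over all r-graphs on at most t vertices not isomorphic to K_t^(r). Then G is isomorphic to K_t^(r). -/

import Mathlib

open Finset Filter

def IsProb {V : Type*} [Fintype V] (μ : V → ℝ) : Prop :=
  (∀ v, 0 ≤ μ v) ∧ ∑ v, μ v = 1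

def hDen {V : Type*} (F : Finset (Finset V)) (μ : V → ℝ) : ℝ :=
  ∑ E ∈ F, ∏ v ∈ E, μ v

noncomputable def lagrangian {V : Type*} [Fintype V] (F : Finset (Finset V)) : ℝ :=
  sSup {x : ℝ | ∃ μ : V → ℝ, IsProb μ ∧ x = hDen F μ}

def CoversPairs {V : Type*} [Fintype V] (G : Finset (Finset V)) : Prop :=
  ∀ u v : V, u ≠ v → ∃ E ∈ G, u ∈ E ∧ v ∈ E

def ContainsHCopy {U W : Type*} [DecidableEq W] (F : Finset (Finset U))
    (Gn : Finset (Finset W)) : Prop :=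
  ∃ f : U ↪ W, ∀ E ∈ F, E.image f ∈ Gn

noncomputable def exNum {U : Type*} (r : ℕ) (F : Finset (Finset U)) (n : ℕ) : ℕ :=
  sSup {m : ℕ | ∃ Gn : Finset (Finset (Fin n)), (∀ E ∈ Gn, E.card = r) ∧
    ¬ ContainsHCopy F Gn ∧ m = Gn.card}

/-- The maximum Lagrangian over `r`-graphs on at most `t` vertices that are not
isomorphic to `K_t^(r)`. -/
noncomputable def lamStar (t r : ℕ) : ℝ :=
  sSup {x : ℝ | ∃ m, m ≤ t ∧ ∃ H : Finset (Finset (Fin m)),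
    (∀ E ∈ H, E.card = r) ∧
    ¬ (∃ e : Fin m ≃ Fin t, ∀ E : Finset (Fin m),
        E ∈ H ↔ E.image e ∈ ((Finset.univ : Finset (Fin t)).powersetCard r)) ∧
    x = lagrangian H}

/-!
If `G` has at most `t` vertices, `λ(G) > λ*` forces `G ≅ K_t^(r)` by the definition of `λ*`.
Otherwise `G` has at least `t + 1` vertices, so every copy of `F` in `G` extends to a copy of
`F^{+(t+1)}`, and `G` is `F`-free. Since `F` covers pairs, a copy of `F` in a blowup of `G` never
uses two vertices of one class, so it projects to a copy of `F` in `G`: all blowups of `G` are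
`F`-free. Blowing up `v` into `⌊n μ(v)⌋` vertices gives `n ^ r · hDen G μ ≲ ex(n, F)`, and
letting `n → ∞` yields `λ(G) ≤ π(F) / r!`, a contradiction.
-/

section Lagrangian

variable {V W : Type*}

lemma IsProb.le_one [Fintype V] {μ : V → ℝ} (h : IsProb μ) (v : V) : μ v ≤ 1 :=
  h.2 ▸ single_le_sum (fun w _ => h.1 w) (mem_univ v)

lemma IsProb.comp_equiv [Fintype V] [Fintype W] {μ : W → ℝ} (h : IsProb μ) (e : V ≃ W) :
    IsProb (μ ∘ e) :=
  ⟨fun v => h.1 (e v), (e.sum_comp μ).trans h.2⟩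

lemma IsProb.sum_floor_mul_le [Fintype V] {μ : V → ℝ} (hμ : IsProb μ) (n : ℕ) :
    ∑ v, ⌊μ v * n⌋₊ ≤ n := by
  have : ∑ v, (⌊μ v * n⌋₊ : ℝ) ≤ n :=
    calc ∑ v, (⌊μ v * n⌋₊ : ℝ) ≤ ∑ v, μ v * n :=
          sum_le_sum fun v _ => Nat.floor_le (by have := hμ.1 v; positivity)
      _ = n := by rw [← sum_mul, hμ.2, one_mul]
  exact_mod_cast this

lemma hDen_le_card [Fintype V] {G : Finset (Finset V)} {μ : V → ℝ} (h : IsProb μ) :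
    hDen G μ ≤ #G :=
  calc hDen G μ ≤ ∑ _E ∈ G, (1 : ℝ) :=
        sum_le_sum fun _ _ => prod_le_one (fun v _ => h.1 v) fun v _ => h.le_one v
    _ = #G := by simp

lemma hDen_div_const {r : ℕ} {G : Finset (Finset V)} (hG : ∀ E ∈ G, #E = r) (w : V → ℝ)
    (c : ℝ) : hDen G (fun v => w v / c) = hDen G w / c ^ r := by
  rw [hDen, hDen, sum_div]
  exact sum_congr rfl fun E hE => by rw [prod_div_distrib, prod_const, hG E hE]

lemma hDen_image_equiv [DecidableEq W] (e : V ≃ W) (G : Finset (Finset V)) (μ : W → ℝ) :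
    hDen (G.image (image e)) μ = hDen G (μ ∘ e) := by
  rw [hDen, sum_image fun _ _ _ _ h => image_injective e.injective h]
  exact sum_congr rfl fun E _ => prod_image fun _ _ _ _ h => e.injective h

lemma lagrangian_le [Fintype V] {G : Finset (Finset V)} {c : ℝ} (hc : 0 ≤ c)
    (h : ∀ μ, IsProb μ → hDen G μ ≤ c) : lagrangian G ≤ c :=
  Real.sSup_le (by rintro x ⟨μ, hμ, rfl⟩; exact h μ hμ) hc

lemma lagrangian_le_card [Fintype V] (G : Finset (Finset V)) : lagrangian G ≤ #G :=
  lagrangian_le (Nat.cast_nonneg _) fun _ => hDen_le_card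

lemma lagrangian_image_equiv [Fintype V] [Fintype W] [DecidableEq W] (e : V ≃ W)
    (G : Finset (Finset V)) :
    lagrangian (G.image (image e)) = lagrangian G := by
  unfold lagrangian
  congr 1
  ext x
  constructor
  · rintro ⟨μ, hμ, rfl⟩
    exact ⟨μ ∘ e, hμ.comp_equiv e, hDen_image_equiv e G μ⟩
  · rintro ⟨μ, hμ, rfl⟩
    refine ⟨μ ∘ e.symm, hμ.comp_equiv e.symm, ?_⟩
    rw [hDen_image_equiv, Function.comp_assoc, e.symm_comp_self, Function.comp_id]

end Lagrangian

lemma lagrangian_le_lamStar_of_fin {t r m : ℕ} (hm : m ≤ t) {H : Finset (Finset (Fin m))}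
    (hH : ∀ E ∈ H, #E = r)
    (hK : ¬ ∃ e : Fin m ≃ Fin t, ∀ E : Finset (Fin m),
      E ∈ H ↔ E.image e ∈ (univ : Finset (Fin t)).powersetCard r) :
    lagrangian H ≤ lamStar t r := by
  refine le_csSup ⟨2 ^ t, ?_⟩ ⟨m, hm, H, hH, hK, rfl⟩
  rintro x ⟨m', hm', H', -, -, rfl⟩
  calc lagrangian H' ≤ #H' := lagrangian_le_card H'
    _ ≤ (2 ^ m' : ℕ) := by
        exact_mod_cast (card_le_univ H').trans_eq (by rw [Fintype.card_finset, Fintype.card_fin])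
    _ ≤ 2 ^ t := by exact_mod_cast Nat.pow_le_pow_right two_pos hm'

lemma lagrangian_le_lamStar {V : Type*} [Fintype V] [DecidableEq V] {t r : ℕ}
    {G : Finset (Finset V)} (hG : ∀ E ∈ G, #E = r) (hV : Fintype.card V ≤ t)
    (hK : ¬ ∃ e : V ≃ Fin t, ∀ E : Finset V,
      E ∈ G ↔ E.image e ∈ (univ : Finset (Fin t)).powersetCard r) :
    lagrangian G ≤ lamStar t r := by
  set e₀ := Fintype.equivFin V
  rw [← lagrangian_image_equiv e₀ G]
  refine lagrangian_le_lamStar_of_fin hV (forall_mem_image.2 fun E hE => ?_)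
    fun ⟨e, he⟩ => hK ⟨e₀.trans e, fun E => ?_⟩
  · rw [card_image_of_injective _ e₀.injective, hG E hE]
  · rw [← (image_injective e₀.injective).mem_finset_image, he, image_image, Equiv.coe_trans]

lemma ContainsHCopy.image_inl {U V W : Type*} [Fintype U] [DecidableEq U] [Fintype V]
    [DecidableEq V] [Fintype W] [DecidableEq W] {F : Finset (Finset U)} {G : Finset (Finset V)}
    (hcard : Fintype.card U + Fintype.card W ≤ Fintype.card V) (h : ContainsHCopy F G) :
    ContainsHCopy (F.image (image (Sum.inl : U → U ⊕ W))) G := by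
  obtain ⟨f, hf⟩ := h
  obtain ⟨g, hg⟩ : ∃ g : W ↪ V, Set.range g ⊆ ↑(univ.map f)ᶜ :=
    Function.Embedding.exists_of_card_le_finset (by rw [card_compl, card_map, card_univ]; omega)
  refine ⟨⟨Sum.elim f g, f.injective.sumElim g.injective fun u w hfg => ?_⟩, ?_⟩
  · exact (by simpa using hg ⟨w, rfl⟩ : ∀ u, f u ≠ g w) u hfg
  · refine forall_mem_image.2 fun E hE => ?_
    rw [image_image]
    exact hf E hE

section Blowup

variable {X V : Type*} [Fintype X] [DecidableEq V]

/-- The blowup of `G` whose vertex classes are the fibres of `ρ`. -/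
def blowup (G : Finset (Finset V)) (ρ : X → V) : Finset (Finset X) :=
  {S | S.image ρ ∈ G ∧ #(S.image ρ) = #S}

lemma card_of_mem_blowup {r : ℕ} {G : Finset (Finset V)} (hG : ∀ E ∈ G, #E = r) {ρ : X → V}
    {S : Finset X} (hS : S ∈ blowup G ρ) : #S = r := by
  rw [blowup, mem_filter] at hS
  rw [← hS.2.2, hG _ hS.2.1]

lemma ContainsHCopy.of_blowup [DecidableEq X] {U : Type*} [Fintype U] {F : Finset (Finset U)}
    (hF : CoversPairs F) {G : Finset (Finset V)} {ρ : X → V}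
    (h : ContainsHCopy F (blowup G ρ)) : ContainsHCopy F G := by
  obtain ⟨f, hf⟩ := h
  have hf' : ∀ E ∈ F, (E.image f).image ρ ∈ G ∧ #((E.image f).image ρ) = #(E.image f) :=
    fun E hE => (mem_filter.1 (hf E hE)).2
  refine ⟨⟨ρ ∘ f, fun u v huv => by_contra fun hne => ?_⟩, fun E hE => ?_⟩
  · obtain ⟨E, hE, hu, hv⟩ := hF u v hne
    exact hne <| f.injective <|
      injOn_of_card_image_eq (hf' E hE).2 (mem_image_of_mem f hu) (mem_image_of_mem f hv) huv
  · convert (hf' E hE).1 using 1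
    rw [image_image]
    rfl

lemma prod_card_fiber_le_card_transversals [DecidableEq X] (ρ : X → V) (E : Finset V) :
    ∏ v ∈ E, #{x | ρ x = v} ≤ #{S : Finset X | S.image ρ = E ∧ #(S.image ρ) = #S} := by
  rw [← card_pi]
  refine card_le_card_of_injOn (fun g => E.attach.image fun v => g v.1 v.2) (fun g hg => ?_) ?_
  · have hρg : ∀ v ∈ E.attach, ρ (g v.1 v.2) = v.1 := fun v _ =>
      (mem_filter.1 (mem_pi.1 hg v.1 v.2)).2
    have himage : (E.attach.image fun v => g v.1 v.2).image ρ = E := by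
      rw [image_image]
      exact (image_congr hρg).trans attach_image_val
    refine mem_filter.2 ⟨mem_univ _, himage, ?_⟩
    rw [himage, card_image_of_injOn fun v _ w _ h => Subtype.ext ?_, card_attach]
    simpa [hρg] using congrArg ρ h
  · intro g₁ hg₁ g₂ hg₂ (h : E.attach.image _ = E.attach.image _)
    funext v hv
    obtain ⟨w, -, hw⟩ := mem_image.1 (h ▸ mem_image_of_mem _ (mem_attach _ ⟨v, hv⟩))
    obtain rfl : w.1 = v := by
      rw [← (mem_filter.1 (mem_pi.1 hg₂ w.1 w.2)).2, ← (mem_filter.1 (mem_pi.1 hg₁ v hv)).2,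
        hw]
    exact hw.symm

lemma sum_prod_card_fiber_le_card_blowup [DecidableEq X] (G : Finset (Finset V)) (ρ : X → V) :
    ∑ E ∈ G, ∏ v ∈ E, #{x | ρ x = v} ≤ #(blowup G ρ) := by
  rw [card_eq_sum_card_fiberwise (f := fun S => S.image ρ) fun S hS => (mem_filter.1 hS).2.1]
  refine sum_le_sum fun E hE =>
    (prod_card_fiber_le_card_transversals ρ E).trans (card_le_card fun S hS => ?_)
  simp only [blowup, mem_filter, mem_univ, true_and] at hS ⊢
  exact ⟨⟨hS.1 ▸ hE, hS.2⟩, hS.1⟩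

end Blowup

lemma exists_le_card_fiber {V : Type*} [Fintype V] [DecidableEq V] [Nonempty V] {n : ℕ}
    (a : V → ℕ) (ha : ∑ v, a v ≤ n) :
    ∃ ρ : Fin n → V, ∀ v, a v ≤ #{x | ρ x = v} := by
  obtain ⟨ι⟩ : Nonempty ((Σ v, Fin (a v)) ↪ Fin n) :=
    Function.Embedding.nonempty_of_card_le (by simpa using ha)
  refine ⟨Function.extend ι Sigma.fst fun _ => Classical.arbitrary V, fun v => ?_⟩
  calc a v = #(univ.image fun i : Fin (a v) => ι ⟨v, i⟩) := by
        rw [card_image_of_injective _ fun i j h => by simpa using ι.injective h, card_univ,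
          Fintype.card_fin]
    _ ≤ _ := card_le_card fun x hx => by
        obtain ⟨i, -, rfl⟩ := mem_image.1 hx
        simp [ι.injective.extend_apply]

lemma card_le_exNum {U : Type*} {r n : ℕ} {F : Finset (Finset U)} {H : Finset (Finset (Fin n))}
    (hH : ∀ E ∈ H, #E = r) (hF : ¬ ContainsHCopy F H) : #H ≤ exNum r F n :=
  le_csSup
    ⟨Fintype.card (Finset (Fin n)), by rintro _ ⟨H', -, -, rfl⟩; exact card_le_univ H'⟩
    ⟨H, hH, hF, rfl⟩

section Density

variable {U V : Type*} [Fintype U] [Fintype V] [DecidableEq V] {r : ℕ} {F : Finset (Finset U)}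
  {G : Finset (Finset V)}

lemma sum_prod_le_exNum [Nonempty V] (hF : CoversPairs F) (hG : ∀ E ∈ G, #E = r)
    (hFG : ¬ ContainsHCopy F G) {n : ℕ} (a : V → ℕ) (ha : ∑ v, a v ≤ n) :
    ∑ E ∈ G, ∏ v ∈ E, a v ≤ exNum r F n := by
  obtain ⟨ρ, hρ⟩ := exists_le_card_fiber a ha
  calc ∑ E ∈ G, ∏ v ∈ E, a v ≤ ∑ E ∈ G, ∏ v ∈ E, #{x | ρ x = v} :=
        sum_le_sum fun E _ => prod_le_prod' fun v _ => hρ v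
    _ ≤ #(blowup G ρ) := sum_prod_card_fiber_le_card_blowup G ρ
    _ ≤ exNum r F n :=
        card_le_exNum (fun _ hS => card_of_mem_blowup hG hS) fun h => hFG (h.of_blowup hF)

lemma tendsto_choose_div_pow (r : ℕ) :
    Tendsto (fun n : ℕ => (n.choose r : ℝ) / n ^ r) atTop (nhds (r.factorial : ℝ)⁻¹) := by
  have hlim : Tendsto (fun n : ℕ => ((n : ℝ) ^ r / r.factorial) / n ^ r) atTop
      (nhds (r.factorial : ℝ)⁻¹) := by
    refine tendsto_const_nhds.congr' ?_
    filter_upwards [eventually_ge_atTop 1] with n hn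
    have : (n : ℝ) ≠ 0 := by positivity
    field_simp
  exact ((isEquivalent_choose r).div .refl).symm.tendsto_nhds hlim

lemma hDen_le_of_tendsto_exNum [Nonempty V] {piF : ℝ} (hF : CoversPairs F)
    (hG : ∀ E ∈ G, #E = r) (hFG : ¬ ContainsHCopy F G)
    (hpi : Tendsto (fun n : ℕ => (exNum r F n : ℝ) / (n.choose r : ℝ)) atTop (nhds piF))
    {μ : V → ℝ} (hμ : IsProb μ) : hDen G μ ≤ piF / r.factorial := by
  have hleft : Tendsto (fun n : ℕ => hDen G fun v => (⌊μ v * n⌋₊ : ℝ) / n) atTop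
      (nhds (hDen G μ)) :=
    tendsto_finsetSum _ fun E _ => tendsto_finsetProd _ fun v _ =>
      (tendsto_nat_floor_mul_div_atTop (hμ.1 v)).comp tendsto_natCast_atTop_atTop
  have hright : Tendsto (fun n : ℕ => (exNum r F n : ℝ) / n ^ r) atTop
      (nhds (piF / r.factorial)) := by
    refine (hpi.mul (tendsto_choose_div_pow r)).congr' ?_
    filter_upwards [eventually_ge_atTop r] with n hn
    have : (n.choose r : ℝ) ≠ 0 := by exact_mod_cast (Nat.choose_pos hn).ne'
    exact div_mul_div_cancel₀ this
  refine le_of_tendsto_of_tendsto' hleft hright fun n => ?_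
  rw [hDen_div_const hG]
  gcongr
  rw [hDen]
  exact_mod_cast sum_prod_le_exNum hF hG hFG _ (hμ.sum_floor_mul_le n)

lemma lagrangian_le_of_tendsto_exNum [Nonempty V] {piF : ℝ} (hF : CoversPairs F)
    (hG : ∀ E ∈ G, #E = r) (hFG : ¬ ContainsHCopy F G)
    (hpi : Tendsto (fun n : ℕ => (exNum r F n : ℝ) / (n.choose r : ℝ)) atTop (nhds piF)) :
    lagrangian G ≤ piF / r.factorial := by
  have hpi_nonneg : 0 ≤ piF := ge_of_tendsto' hpi fun n => by positivity
  exact lagrangian_le (by positivity) fun μ hμ => hDen_le_of_tendsto_exNum hF hG hFG hpi hμ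

end Density

theorem mubayi_gen_weight_stability_general {V U : Type*} [Fintype V] [DecidableEq V]
    [Fintype U] [DecidableEq U] (r t : ℕ)
    (F : Finset (Finset U)) (hFcov : CoversPairs F)
    (hU : Fintype.card U ≤ t)
    (piF : ℝ)
    (hpi : Tendsto (fun n : ℕ => (exNum r F n : ℝ) / (n.choose r : ℝ)) atTop (nhds piF))
    (G : Finset (Finset V)) (hGcard : ∀ E ∈ G, E.card = r)
    (hGfree : ¬ ContainsHCopy
      (F.image (Finset.image (Sum.inl : U → U ⊕ Fin (t + 1 - Fintype.card U)))) G)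
    (hlam : max (lamStar t r) (piF / (r.factorial : ℝ)) < lagrangian G) :
    ∃ e : V ≃ Fin t, ∀ E : Finset V,
      E ∈ G ↔ E.image e ∈ ((Finset.univ : Finset (Fin t)).powersetCard r) := by
  by_cases hVt : Fintype.card V ≤ t
  · by_contra hK
    exact (lagrangian_le_lamStar hGcard hVt hK).not_gt ((le_max_left _ _).trans_lt hlam)
  · have : Nonempty V := Fintype.card_pos_iff.1 (by omega)
    have hFG : ¬ ContainsHCopy F G := fun h =>
      hGfree (h.image_inl (by rw [Fintype.card_fin]; omega))
    exact absurd (lagrangian_le_of_tendsto_exNum hFcov hGcard hFG hpi)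
      ((le_max_right _ _).trans_lt hlam).not_ge

/-- Let `F` be an `r`-graph covering pairs with at most `t` vertices and Turán density
`π(F) < r!·λ(K_t^(r)) = r!·t^(−r)·C(t,r)`. If `G` covers pairs, is `F^{+(t+1)}`-free,
and `λ(G) > max{λ*, π(F)/r!}`, then `G` is isomorphic to `K_t^(r)`. -/
theorem mubayi_gen_weight_stability {V U : Type*} [Fintype V] [DecidableEq V]
    [Fintype U] [DecidableEq U] (r t : ℕ) (hr : 2 ≤ r) (hrt : r ≤ t)
    (F : Finset (Finset U)) (hFcard : ∀ E ∈ F, E.card = r) (hFcov : CoversPairs F)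
    (hU : Fintype.card U ≤ t)
    (piF : ℝ)
    (hpi : Tendsto (fun n : ℕ => (exNum r F n : ℝ) / (n.choose r : ℝ)) atTop (nhds piF))
    (hpi_lt : piF < (r.factorial : ℝ) * ((t.choose r : ℝ) / (t : ℝ) ^ r))
    (G : Finset (Finset V)) (hGcard : ∀ E ∈ G, E.card = r) (hGcov : CoversPairs G)
    (hGfree : ¬ ContainsHCopy
      (F.image (Finset.image (Sum.inl : U → U ⊕ Fin (t + 1 - Fintype.card U)))) G)
    (hlam : max (lamStar t r) (piF / (r.factorial : ℝ)) < lagrangian G) :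
    ∃ e : V ≃ Fin t, ∀ E : Finset V,
      E ∈ G ↔ E.image e ∈ ((Finset.univ : Finset (Fin t)).powersetCard r) :=
  mubayi_gen_weight_stability_general r t F hFcov hU piF hpi G hGcard hGfree hlam
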